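/- arXiv:1605.08095 — 2 statements merged into one kernel-verified Lean document; each statement's English description precedes it below -/
import Mathlib

section
/- Let $f(z) = \sum_{k=0}^{\infty} a_{k+1}(2k+n) z^{2k}$ where $a_k = \frac{2^{2k}B_{2k}}{(2k)!}$ and $n \geq 1$. Then the radius of convergence of this power series is exactly $\pi$. -/
/-!
Euler's formula `ζ(2k) = (-1)^(k+1) 2^(2k-1) π^(2k) B_(2k) / (2k)!` says exactly that
`|a_k| π^(2k) = 2 ζ(2k)`, and `1 ≤ ζ(2k) ≤ ζ(2) < 2`. So, up to factors in `[2, 4]`,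
the `k`-th term of the series is `(2k + n) (z / π)^(2k)`: it is dominated by a convergent
arithmetico-geometric series when `|z| < π` and grows without bound when `|z| > π`.
-/

open Real Filter

/-- The coefficients `a_k = 2^(2k) B_(2k) / (2k)!` of the Laurent series of
`coth z - 1/z`. -/
noncomputable def langevinCoeff (k : ℕ) : ℝ :=
  2 ^ (2 * k) * ((bernoulli (2 * k) : ℚ) : ℝ) / (Nat.factorial (2 * k) : ℝ)

lemma hasSum_zeta_nat_langevinCoeff {k : ℕ} (hk : k ≠ 0) :
    HasSum (fun i : ℕ => 1 / (i : ℝ) ^ (2 * k))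
      ((-1) ^ (k + 1) * langevinCoeff k * π ^ (2 * k) / 2) := by
  convert hasSum_zeta_nat hk using 1
  obtain ⟨j, rfl⟩ := Nat.exists_eq_succ_of_ne_zero hk
  rw [langevinCoeff, show 2 * (j + 1) - 1 = 2 * j + 1 by omega,
    show 2 * (j + 1) = 2 * j + 1 + 1 by omega, pow_succ 2 (2 * j + 1)]
  ring

lemma hasSum_zeta_nat_abs_langevinCoeff {k : ℕ} (hk : k ≠ 0) :
    HasSum (fun i : ℕ => 1 / (i : ℝ) ^ (2 * k)) (|langevinCoeff k| * π ^ (2 * k) / 2) := by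
  have h := hasSum_zeta_nat_langevinCoeff hk
  have hpos : 0 ≤ (-1) ^ (k + 1) * langevinCoeff k * π ^ (2 * k) / 2 :=
    h.nonneg fun i => by positivity
  convert h using 1
  rw [← abs_of_nonneg hpos, abs_div, abs_mul, abs_mul, abs_pow, abs_neg, abs_one, one_pow,
    one_mul, abs_of_pos (pow_pos pi_pos _), abs_two]

lemma abs_langevinCoeff_mul_pi_pow_mem_Icc {k : ℕ} (hk : k ≠ 0) :
    |langevinCoeff k| * π ^ (2 * k) ∈ Set.Icc 2 4 := by
  have h := hasSum_zeta_nat_abs_langevinCoeff hk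
  have hlower : 1 ≤ |langevinCoeff k| * π ^ (2 * k) / 2 := by
    simpa using le_hasSum h 1 fun i _ => by positivity
  have hupper : |langevinCoeff k| * π ^ (2 * k) / 2 ≤ π ^ 2 / 6 := by
    refine hasSum_le (fun i => ?_) h hasSum_zeta_two
    rcases Nat.eq_zero_or_pos i with rfl | hi
    · simp [hk]
    · gcongr
      · exact_mod_cast hi
      · omega
  constructor <;> nlinarith [pi_lt_d2, pi_pos]

section LinearFactor

variable {c : ℕ → ℝ} {R : ℝ}

lemma abs_mul_pow_two_mul_eq (hR : R ≠ 0) (x z : ℝ) (k : ℕ) :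
    |x * z ^ (2 * k)| = |x| * R ^ (2 * k) * ((z / R) ^ 2) ^ k := by
  rw [abs_mul, pow_mul, pow_mul, abs_pow, abs_sq, div_pow, div_pow, mul_assoc,
    mul_div_cancel₀ _ (pow_ne_zero _ (pow_ne_zero _ hR))]

lemma summable_mul_linear_mul_pow_of_abs_mul_pow_le (hR : 0 < R) {B : ℝ}
    (hc : ∀ k, |c k| * R ^ (2 * k) ≤ B) (a b : ℝ) {z : ℝ} (hz : |z| < R) :
    Summable fun k : ℕ => c k * (a * k + b) * z ^ (2 * k) := by
  have hB : 0 ≤ B := (by positivity : 0 ≤ |c 0| * R ^ (2 * 0)).trans (hc 0)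
  have hr0 : 0 ≤ (z / R) ^ 2 := sq_nonneg _
  have hr1 : (z / R) ^ 2 < 1 := by
    rw [← sq_abs, abs_div, abs_of_pos hR, div_pow, div_lt_one (by positivity)]
    exact pow_lt_pow_left₀ hz (abs_nonneg z) two_ne_zero
  have hmajorant : Summable fun k : ℕ =>
      B * |a| * (k * ((z / R) ^ 2) ^ k) + B * |b| * ((z / R) ^ 2) ^ k :=
    ((hasSum_coe_mul_geometric_of_norm_lt_one (𝕜 := ℝ)
        (by rwa [norm_of_nonneg hr0])).summable.mul_left _).add
      ((summable_geometric_of_lt_one hr0 hr1).mul_left _)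
  refine .of_norm_bounded hmajorant fun k => ?_
  have hlin : |a * k + b| ≤ |a| * k + |b| := by
    simpa [abs_mul] using abs_add_le (a * k) b
  rw [Real.norm_eq_abs, mul_right_comm, abs_mul, abs_mul_pow_two_mul_eq hR.ne']
  calc |c k| * R ^ (2 * k) * ((z / R) ^ 2) ^ k * |a * k + b|
      ≤ B * ((z / R) ^ 2) ^ k * (|a| * k + |b|) :=
        mul_le_mul (by gcongr; exact hc k) hlin (abs_nonneg _)
          (mul_nonneg hB (pow_nonneg hr0 k))
    _ = _ := by ring

lemma not_summable_mul_linear_mul_pow_of_le_abs_mul_pow (hR : 0 < R) {A : ℝ} (hA : 0 < A)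
    (hc : ∀ k, A ≤ |c k| * R ^ (2 * k)) {a : ℝ} (ha : a ≠ 0) (b : ℝ) {z : ℝ}
    (hz : R < |z|) :
    ¬ Summable fun k : ℕ => c k * (a * k + b) * z ^ (2 * k) := by
  intro hsum
  have hr1 : 1 ≤ (z / R) ^ 2 := by
    rw [← sq_abs, abs_div, abs_of_pos hR, div_pow, one_le_div (by positivity)]
    exact pow_le_pow_left₀ hR.le hz.le 2
  have hlin : Tendsto (fun k : ℕ => |a| * k - |b|) atTop atTop :=
    tendsto_atTop_add_const_right _ _ <|
      (tendsto_natCast_atTop_atTop).const_mul_atTop (abs_pos.mpr ha)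
  have hterm : Tendsto (fun k : ℕ => |c k * (a * k + b) * z ^ (2 * k)|) atTop atTop := by
    refine tendsto_atTop_mono (fun k => ?_) (hlin.const_mul_atTop hA)
    rw [mul_right_comm, abs_mul, abs_mul_pow_two_mul_eq hR.ne']
    calc A * (|a| * k - |b|) ≤ A * |a * k + b| := by
          gcongr; simpa [abs_mul] using abs_sub_abs_le_abs_add (a * k) b
      _ ≤ |c k| * R ^ (2 * k) * ((z / R) ^ 2) ^ k * |a * k + b| := by
          gcongr
          exact (hc k).trans (le_mul_of_one_le_right (by positivity) (one_le_pow₀ hr1))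
  exact not_tendsto_nhds_of_tendsto_atTop hterm 0 (by simpa using hsum.tendsto_atTop_zero.abs)

end LinearFactor

theorem fKernel_series_radius_general (n : ℕ) :
    (∀ z : ℝ, |z| < Real.pi →
      Summable (fun k : ℕ => langevinCoeff (k + 1) * (2 * (k : ℝ) + n) * z ^ (2 * k))) ∧
    (∀ z : ℝ, Real.pi < |z| →
      ¬ Summable (fun k : ℕ => langevinCoeff (k + 1) * (2 * (k : ℝ) + n) * z ^ (2 * k))) := by
  have hbounds (k : ℕ) :
      |langevinCoeff (k + 1)| * π ^ (2 * k) ∈ Set.Icc (2 / π ^ 2) (4 / π ^ 2) := by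
    have h := abs_langevinCoeff_mul_pi_pow_mem_Icc k.succ_ne_zero
    rw [Nat.succ_eq_add_one, mul_add, mul_one, pow_add, ← mul_assoc] at h
    exact ⟨(div_le_iff₀ (by positivity)).2 h.1, (le_div_iff₀ (by positivity)).2 h.2⟩
  exact ⟨fun z hz =>
      summable_mul_linear_mul_pow_of_abs_mul_pow_le pi_pos (fun k => (hbounds k).2) 2 n hz,
    fun z hz => not_summable_mul_linear_mul_pow_of_le_abs_mul_pow pi_pos (by positivity)
      (fun k => (hbounds k).1) two_ne_zero n hz⟩

theorem fKernel_series_radius (n : ℕ) (hn : 1 ≤ n) :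
    (∀ z : ℝ, |z| < Real.pi →
      Summable (fun k : ℕ => langevinCoeff (k + 1) * (2 * (k : ℝ) + n) * z ^ (2 * k))) ∧
    (∀ z : ℝ, Real.pi < |z| →
      ¬ Summable (fun k : ℕ => langevinCoeff (k + 1) * (2 * (k : ℝ) + n) * z ^ (2 * k))) :=
  fKernel_series_radius_general n
end

section
/- The derivative of the Langevin function, $\mathcal{L}'(x) = 1/x^2 - 1/\sinh^2(x)$ for $x \neq 0$ (with $\mathcal{L}'(0) = 1/3$), satisfies $0 < \mathcal{L}'(x) \leq 1/3$ for all real $x$. -/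
/-!
With `t = 2x` one has `2 sinh² x = cosh t - 1`, and the upper bound becomes
`(12 - t²)(cosh t - 1) ≤ 6t²`. In the Taylor series of the left side the coefficient of
`t^(2k)` is `(12 - 2k(2k - 1)) / (2k)!`, which is `6` for `k = 1` and `≤ 0` for `k ≥ 2`.
The lower bound is `|x| < |sinh x|`.
-/

noncomputable def langevinDeriv (x : ℝ) : ℝ :=
  if x = 0 then 1 / 3 else 1 / x ^ 2 - 1 / Real.sinh x ^ 2

open Real Nat

lemma sq_mul_pow_div_factorial (t : ℝ) (n : ℕ) :
    t ^ 2 * (t ^ (2 * n) / (2 * n)!) =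
      (2 * n + 2) * (2 * n + 1) * (t ^ (2 * (n + 1)) / (2 * (n + 1))!) := by
  rw [show 2 * (n + 1) = 2 * n + 1 + 1 by ring, factorial_succ, factorial_succ]
  field_simp
  push_cast
  ring

lemma twelve_sub_sq_mul_cosh_sub_one_le (t : ℝ) : (12 - t ^ 2) * (cosh t - 1) ≤ 6 * t ^ 2 := by
  set a : ℕ → ℝ := fun n ↦ t ^ (2 * n) / (2 * n)!
  have h1 : HasSum (fun n ↦ a (n + 1)) (cosh t - 1) := by
    simpa [a] using (hasSum_nat_add_iff' 1).2 (hasSum_cosh t)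
  have h2 : HasSum (fun n ↦ a (n + 2)) (cosh t - 1 - t ^ 2 / 2) := by
    simpa [a, Finset.sum_range_succ, sub_sub] using (hasSum_nat_add_iff' 2).2 (hasSum_cosh t)
  have hterm (n : ℕ) : 12 * a (n + 2) - t ^ 2 * a (n + 1) ≤ 0 := by
    have hcoeff : (12 : ℝ) ≤ (2 * (n + 1 : ℕ) + 2) * (2 * (n + 1 : ℕ) + 1) := by
      push_cast; nlinarith [n.cast_nonneg (α := ℝ)]
    have ha : 0 ≤ a (n + 2) := by simp only [a, pow_mul]; positivity
    rw [sq_mul_pow_div_factorial t (n + 1)]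
    linarith [mul_le_mul_of_nonneg_right hcoeff ha]
  have := ((h2.mul_left 12).sub (h1.mul_left (t ^ 2))).nonpos hterm
  linarith

lemma sinh_sq_mul_three_sub_sq_le (x : ℝ) : sinh x ^ 2 * (3 - x ^ 2) ≤ 3 * x ^ 2 := by
  have h := twelve_sub_sq_mul_cosh_sub_one_le (2 * x)
  rw [cosh_two_mul, cosh_sq] at h
  linarith

lemma sq_lt_sinh_sq {x : ℝ} (hx : x ≠ 0) : x ^ 2 < sinh x ^ 2 :=
  sq_lt_sq.2 <| by rw [abs_sinh]; exact self_lt_sinh_iff.2 (abs_pos.2 hx)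

theorem langevinDeriv_pos_le_third (x : ℝ) :
    0 < langevinDeriv x ∧ langevinDeriv x ≤ 1 / 3 := by
  rcases eq_or_ne x 0 with rfl | hx
  · norm_num [langevinDeriv]
  have hx2 : 0 < x ^ 2 := by positivity
  have hlt := sq_lt_sinh_sq hx
  rw [langevinDeriv, if_neg hx]
  constructor
  · exact sub_pos.2 (one_div_lt_one_div_of_lt hx2 hlt)
  · rw [div_sub_div _ _ hx2.ne' (hx2.trans hlt).ne', div_le_div_iff₀ (by positivity) three_pos]
    nlinarith [sinh_sq_mul_three_sub_sq_le x]
end
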